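/- arXiv:2401.09747 — 3 statements merged into one kernel-verified Lean document; each statement's English description precedes it below -/
import Mathlib

section
/- Suppose γ ≥ 1, p* > 1, L_f > 0, C > 0, and f : ℝ×ℝ^d → ℝ^d, g : ℝ×ℝ^d → ℝ^{d×m} satisfy, for all x,y ∈ ℝ^d and s,t ∈ ℝ: (i) ⟨x−y, f(t,x)−f(s,y)⟩ + (p*−1)|g(t,x)−g(s,y)|² ≤ L_f|x−y|² + C(1+|x|+|y|)^{γ+1}|t−s|, and (ii) |f(t,x)−f(s,y)| ≤ C((1+|x|+|y|)^{γ−1}|x−y| + (1+|x|+|y|)^{γ}|t−s|). Then there exists a constant C' > 0 such that |g(t,x)−g(s,y)|² ≤ C'(1+|x|+|y|)^{γ−1}|x−y|² + C'(1+|x|+|y|)^{γ+1}|t−s| for all x,y ∈ ℝ^d and s,t ∈ ℝ. -/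
/-
(p* − 1)|g(t,x) − g(s,y)|² is bounded by (i), after moving the inner product to the right-hand
side, by Cauchy–Schwarz and (ii). Writing A = 1 + |x| + |y|, the weights then combine because
|x − y| ≤ A and 1 ≤ A^{γ−1}: the mixed term A^γ |x − y| |t − s| is at most A^{γ+1} |t − s|, and
L_f |x − y|² is at most L_f A^{γ−1} |x − y|².
-/

/-- The Euclidean norm on `Fin n → ℝ`. -/
noncomputable def vnorm {n : ℕ} (x : Fin n → ℝ) : ℝ := Real.sqrt (∑ i, x i ^ 2)

/-- The Euclidean inner product on `Fin n → ℝ`. -/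
def vinner {n : ℕ} (x y : Fin n → ℝ) : ℝ := ∑ i, x i * y i

/-- The Frobenius (trace) norm of a real `d × m` matrix. -/
noncomputable def mnorm {d m : ℕ} (M : Matrix (Fin d) (Fin m) ℝ) : ℝ :=
  Real.sqrt (∑ i, ∑ j, M i j ^ 2)

lemma vnorm_eq_norm {n : ℕ} (x : Fin n → ℝ) : vnorm x = ‖WithLp.toLp 2 x‖ := by
  simp [vnorm, EuclideanSpace.norm_eq]

lemma vinner_eq_inner {n : ℕ} (x y : Fin n → ℝ) :
    vinner x y = inner ℝ (WithLp.toLp 2 x) (WithLp.toLp 2 y) := by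
  simp [vinner, PiLp.inner_apply, mul_comm]

lemma vnorm_nonneg {n : ℕ} (x : Fin n → ℝ) : 0 ≤ vnorm x := Real.sqrt_nonneg _

lemma vnorm_sub_le {n : ℕ} (x y : Fin n → ℝ) : vnorm (x - y) ≤ vnorm x + vnorm y := by
  simpa only [vnorm_eq_norm, WithLp.toLp_sub] using norm_sub_le _ _

lemma abs_vinner_le {n : ℕ} (x y : Fin n → ℝ) : |vinner x y| ≤ vnorm x * vnorm y := by
  simpa only [vinner_eq_inner, vnorm_eq_norm] using abs_real_inner_le_norm _ _

lemma neg_vinner_le_of_vnorm_le {n : ℕ} {u v : Fin n → ℝ} {gam C A τ : ℝ}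
    (hC : 0 ≤ C) (hA : 0 < A) (huA : vnorm u ≤ A) (hτ : 0 ≤ τ)
    (hv : vnorm v ≤ C * (A ^ (gam - 1) * vnorm u + A ^ gam * τ)) :
    -vinner u v ≤ C * (A ^ (gam - 1) * vnorm u ^ 2 + A ^ (gam + 1) * τ) := by
  have hu := vnorm_nonneg u
  have hmixed : A ^ gam * vnorm u * τ ≤ A ^ (gam + 1) * τ := by
    rw [Real.rpow_add_one hA.ne']
    gcongr
  calc -vinner u v ≤ vnorm u * vnorm v := (neg_le_abs _).trans (abs_vinner_le u v)
    _ ≤ vnorm u * (C * (A ^ (gam - 1) * vnorm u + A ^ gam * τ)) := by gcongr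
    _ = C * (A ^ (gam - 1) * vnorm u ^ 2 + A ^ gam * vnorm u * τ) := by ring
    _ ≤ C * (A ^ (gam - 1) * vnorm u ^ 2 + A ^ (gam + 1) * τ) := by gcongr

/-- under the coupled monotonicity-type condition (i) and the polynomial
Lipschitz condition (ii) on `f`, the diffusion coefficient `g` satisfies a polynomial
Lipschitz-type estimate in space and time. -/
theorem diffusion_polynomial_lipschitz (d m : ℕ) (gam pstar Lf C : ℝ)
    (hgam : 1 ≤ gam) (hp : 1 < pstar) (hLf : 0 < Lf) (hC : 0 < C)
    (f : ℝ → (Fin d → ℝ) → (Fin d → ℝ))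
    (g : ℝ → (Fin d → ℝ) → Matrix (Fin d) (Fin m) ℝ)
    (h1 : ∀ (t s : ℝ) (x y : Fin d → ℝ),
      vinner (x - y) (f t x - f s y) + (pstar - 1) * mnorm (g t x - g s y) ^ 2 ≤
        Lf * vnorm (x - y) ^ 2 + C * (1 + vnorm x + vnorm y) ^ (gam + 1) * |t - s|)
    (h2 : ∀ (t s : ℝ) (x y : Fin d → ℝ),
      vnorm (f t x - f s y) ≤
        C * ((1 + vnorm x + vnorm y) ^ (gam - 1) * vnorm (x - y)
          + (1 + vnorm x + vnorm y) ^ gam * |t - s|)) :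
    ∃ C' : ℝ, 0 < C' ∧
      ∀ (t s : ℝ) (x y : Fin d → ℝ),
        mnorm (g t x - g s y) ^ 2 ≤
          C' * (1 + vnorm x + vnorm y) ^ (gam - 1) * vnorm (x - y) ^ 2
            + C' * (1 + vnorm x + vnorm y) ^ (gam + 1) * |t - s| := by
  have hp1 : 0 < pstar - 1 := sub_pos.2 hp
  refine ⟨(Lf + 2 * C) / (pstar - 1), by positivity, fun t s x y => ?_⟩
  set A := 1 + vnorm x + vnorm y
  have hA : 1 ≤ A := by linarith [vnorm_nonneg x, vnorm_nonneg y]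
  have hxy : vnorm (x - y) ≤ A := by linarith [vnorm_sub_le x y]
  have hdrift := neg_vinner_le_of_vnorm_le hC.le (by linarith) hxy (abs_nonneg (t - s))
    (h2 t s x y)
  have hweight : vnorm (x - y) ^ 2 ≤ A ^ (gam - 1) * vnorm (x - y) ^ 2 :=
    le_mul_of_one_le_left (sq_nonneg _) (Real.one_le_rpow hA (by linarith))
  have hspace : 0 ≤ A ^ (gam - 1) * vnorm (x - y) ^ 2 := by positivity
  have htime : 0 ≤ A ^ (gam + 1) * |t - s| := by positivity
  rw [mul_assoc, mul_assoc, ← mul_add, div_mul_eq_mul_div, le_div_iff₀ hp1]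
  linarith [h1 t s x y, mul_le_mul_of_nonneg_left hweight hLf.le, mul_nonneg hC.le hspace,
    mul_nonneg hLf.le htime]
end

section
/- One-step lower estimate for the implicit part of the theta method (moment-bound form): Let A be a real symmetric d×d matrix with ⟨Ax, x⟩ ≥ λ|x|² for all x ∈ ℝ^d, λ > 0; let p* > 1, 0 < L̃ < λ, C̃ ≥ 0, θ ≥ 0, Δ ≥ 0, and suppose f : ℝ×ℝ^d → ℝ^d, g : ℝ×ℝ^d → ℝ^{d×m} satisfy ⟨x, f(t,x)⟩ + ((p*−1)/2)|g(t,x)|² ≤ L̃|x|² + C̃ for all x ∈ ℝ^d, t ∈ ℝ. Then for all x ∈ ℝ^d and t ∈ ℝ: |x − θΔ(−Ax + f(t,x))|² ≥ (1 + 2(λ−L̃)θΔ)|x|² + (p*−1)θΔ|g(t,x)|² + θ²Δ²|Ax − f(t,x)|² − 2C̃θΔ. -/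
section EuclideanCoordinates

variable {n : ℕ}

lemma vnorm_sq (x : Fin n → ℝ) : vnorm x ^ 2 = vinner x x := by
  rw [vnorm, Real.sq_sqrt (Finset.sum_nonneg fun _ _ => sq_nonneg _)]
  exact Finset.sum_congr rfl fun i _ => sq (x i)

lemma vinner_comm (x y : Fin n → ℝ) : vinner x y = vinner y x :=
  Finset.sum_congr rfl fun _ _ => mul_comm _ _

lemma vinner_sub_right (x y z : Fin n → ℝ) : vinner x (y - z) = vinner x y - vinner x z := by
  simp only [vinner, Pi.sub_apply, mul_sub, Finset.sum_sub_distrib]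

lemma vnorm_add_smul_sq (x v : Fin n → ℝ) (c : ℝ) :
    vnorm (x + c • v) ^ 2 = vnorm x ^ 2 + 2 * c * vinner x v + c ^ 2 * vnorm v ^ 2 := by
  simp only [vnorm_sq, vinner, Pi.add_apply, Pi.smul_apply, smul_eq_mul, Finset.mul_sum,
    ← Finset.sum_add_distrib]
  exact Finset.sum_congr rfl fun i _ => by ring

lemma le_vnorm_add_smul_sq {x v : Fin n → ℝ} {b c : ℝ} (hc : 0 ≤ c) (hb : b ≤ vinner x v) :
    vnorm x ^ 2 + 2 * c * b + c ^ 2 * vnorm v ^ 2 ≤ vnorm (x + c • v) ^ 2 := by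
  rw [vnorm_add_smul_sq]
  nlinarith

end EuclideanCoordinates

theorem theta_implicit_lower_moment_general (d m : ℕ) (A : Matrix (Fin d) (Fin d) ℝ)
    (lam pstar Ltil Ctil θ Δ : ℝ)
    (hA : ∀ x : Fin d → ℝ, lam * vnorm x ^ 2 ≤ vinner (A.mulVec x) x)
    (hθ : 0 ≤ θ) (hΔ : 0 ≤ Δ)
    (f : ℝ → (Fin d → ℝ) → (Fin d → ℝ))
    (g : ℝ → (Fin d → ℝ) → Matrix (Fin d) (Fin m) ℝ)
    (hmono : ∀ (t : ℝ) (x : Fin d → ℝ),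
      vinner x (f t x) + (pstar - 1) / 2 * mnorm (g t x) ^ 2 ≤ Ltil * vnorm x ^ 2 + Ctil) :
    ∀ (x : Fin d → ℝ) (t : ℝ),
      (1 + 2 * (lam - Ltil) * θ * Δ) * vnorm x ^ 2
          + (pstar - 1) * θ * Δ * mnorm (g t x) ^ 2
          + θ ^ 2 * Δ ^ 2 * vnorm (A.mulVec x - f t x) ^ 2
          - 2 * Ctil * θ * Δ ≤
        vnorm (x - (θ * Δ) • (-(A.mulVec x) + f t x)) ^ 2 := by
  intro x t
  have hcross : (lam - Ltil) * vnorm x ^ 2 + (pstar - 1) / 2 * mnorm (g t x) ^ 2 - Ctil ≤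
      vinner x (A.mulVec x - f t x) := by
    rw [vinner_sub_right, vinner_comm x]
    linarith [hA x, hmono t x]
  have hstep : x - (θ * Δ) • (-(A.mulVec x) + f t x) = x + (θ * Δ) • (A.mulVec x - f t x) := by
    rw [neg_add_eq_sub, ← neg_sub (A.mulVec x), smul_neg, sub_neg_eq_add]
  calc _ = vnorm x ^ 2
          + 2 * (θ * Δ) * ((lam - Ltil) * vnorm x ^ 2 + (pstar - 1) / 2 * mnorm (g t x) ^ 2 - Ctil)
          + (θ * Δ) ^ 2 * vnorm (A.mulVec x - f t x) ^ 2 := by ring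
    _ ≤ _ := hstep ▸ le_vnorm_add_smul_sq (mul_nonneg hθ hΔ) hcross

/-- one-step lower estimate for the implicit part of the theta method
(moment-bound form). -/
theorem theta_implicit_lower_moment (d m : ℕ) (A : Matrix (Fin d) (Fin d) ℝ)
    (lam pstar Ltil Ctil θ Δ : ℝ) (hAsymm : A.IsSymm) (hlam : 0 < lam)
    (hA : ∀ x : Fin d → ℝ, lam * vnorm x ^ 2 ≤ vinner (A.mulVec x) x)
    (hp : 1 < pstar) (hLtil0 : 0 < Ltil) (hLtil : Ltil < lam) (hCtil : 0 ≤ Ctil)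
    (hθ : 0 ≤ θ) (hΔ : 0 ≤ Δ)
    (f : ℝ → (Fin d → ℝ) → (Fin d → ℝ))
    (g : ℝ → (Fin d → ℝ) → Matrix (Fin d) (Fin m) ℝ)
    (hmono : ∀ (t : ℝ) (x : Fin d → ℝ),
      vinner x (f t x) + (pstar - 1) / 2 * mnorm (g t x) ^ 2 ≤ Ltil * vnorm x ^ 2 + Ctil) :
    ∀ (x : Fin d → ℝ) (t : ℝ),
      (1 + 2 * (lam - Ltil) * θ * Δ) * vnorm x ^ 2
          + (pstar - 1) * θ * Δ * mnorm (g t x) ^ 2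
          + θ ^ 2 * Δ ^ 2 * vnorm (A.mulVec x - f t x) ^ 2
          - 2 * Ctil * θ * Δ ≤
        vnorm (x - (θ * Δ) • (-(A.mulVec x) + f t x)) ^ 2 :=
  theta_implicit_lower_moment_general d m A lam pstar Ltil Ctil θ Δ hA hθ hΔ f g hmono
end

section
/- Coupled monotonicity condition for the example SDE: Let a > 0, b, c, d ∈ ℝ and p* > 1 with 12d²(p*−1) ≤ a. Define f(t,x) = −a x³(1 + sin(πt)) and g(t,x) = b + cx + d x²(1 + sin(πt)) for t, x ∈ ℝ. Then for all x, y, s, t ∈ ℝ: (x−y)(f(t,x) − f(s,y)) + (p*−1)(g(t,x) − g(s,y))² ≤ 3c²(p*−1)(x−y)² + (2aπ + 6πd²(p*−1))(1 + x⁴ + y⁴)|t−s|. -/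
/-!
Write `u = 1 + sin (π t)` and `v = 1 + sin (π s)`, both in `[0, 2]` with `|u - v| ≤ π |t - s|`.
Splitting `u x³ - v y³ = u (x³ - y³) + y³ (u - v)` and `u x² - v y² = u (x² - y²) + y² (u - v)`,
and bounding the square of the three-term diffusion increment by three times the sum of squares,
the terms carrying `x³ - y³` and `x² - y²` combine to
`(x - y)² u (3 d² (p* - 1) u (x + y)² - a (x² + x y + y²))`, which is `≤ 0` because
`(x + y)² ≤ 2 (x² + x y + y²)`, `u ≤ 2` and `12 d² (p* - 1) ≤ a`.
The terms carrying `u - v` are at most `|t - s|` times a quartic in `x, y`.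
-/

open Real

lemma sq_add_add_le_three_mul (p q r : ℝ) :
    (p + q + r) ^ 2 ≤ 3 * (p ^ 2 + q ^ 2 + r ^ 2) := by
  nlinarith [sq_nonneg (p - q), sq_nonneg (q - r), sq_nonneg (p - r)]

lemma abs_pow_three_mul_sub_le (x y : ℝ) :
    |y ^ 3 * (x - y)| ≤ 2 * (1 + x ^ 4 + y ^ 4) := by
  rw [abs_le]
  constructor
  · nlinarith [sq_nonneg (y ^ 2 + x * y), sq_nonneg (x ^ 2 - y ^ 2)]
  · nlinarith [sq_nonneg (y ^ 2 - x * y), sq_nonneg (x ^ 2 - y ^ 2)]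

lemma abs_sin_mul_sub_sin_mul_le (k t s : ℝ) (hk : 0 ≤ k) :
    |sin (k * t) - sin (k * s)| ≤ k * |t - s| := by
  simpa only [← mul_sub, abs_mul, abs_of_nonneg hk] using abs_sin_sub_sin_le (k * t) (k * s)

section CoupledMonotonicity

variable {a d q u v δ : ℝ}

lemma cubic_drift_dominates_quadratic_diffusion (x y : ℝ) (hq : 0 ≤ q)
    (hd : 12 * d ^ 2 * q ≤ a) (hu₀ : 0 ≤ u) (hu₂ : u ≤ 2) :
    -a * u * ((x - y) * (x ^ 3 - y ^ 3)) + 3 * q * (d * u * (x ^ 2 - y ^ 2)) ^ 2 ≤ 0 := by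
  have hQ : 0 ≤ x ^ 2 + x * y + y ^ 2 := by nlinarith [sq_nonneg (x + y), sq_nonneg x, sq_nonneg y]
  have hK : 0 ≤ q * d ^ 2 := mul_nonneg hq (sq_nonneg d)
  have hbound : 3 * q * d ^ 2 * u * (x + y) ^ 2 ≤ a * (x ^ 2 + x * y + y ^ 2) := by
    nlinarith [mul_nonneg (mul_nonneg hK (sq_nonneg (x + y))) (by linarith : 0 ≤ 2 - u),
      mul_nonneg hK (by nlinarith [sq_nonneg x, sq_nonneg y] :
        0 ≤ 2 * (x ^ 2 + x * y + y ^ 2) - (x + y) ^ 2),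
      mul_nonneg hQ (by linarith : 0 ≤ a - 12 * d ^ 2 * q)]
  calc -a * u * ((x - y) * (x ^ 3 - y ^ 3)) + 3 * q * (d * u * (x ^ 2 - y ^ 2)) ^ 2
      = u * (x - y) ^ 2 * (3 * q * d ^ 2 * u * (x + y) ^ 2 - a * (x ^ 2 + x * y + y ^ 2)) := by
        ring
    _ ≤ 0 := mul_nonpos_of_nonneg_of_nonpos (by positivity) (by linarith)

lemma drift_time_increment_le (x y : ℝ) (ha : 0 ≤ a) (huv : |u - v| ≤ δ) :
    -a * (y ^ 3 * (x - y) * (u - v)) ≤ 2 * a * (1 + x ^ 4 + y ^ 4) * δ := by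
  have h : -(y ^ 3 * (x - y) * (u - v)) ≤ 2 * (1 + x ^ 4 + y ^ 4) * δ :=
    calc -(y ^ 3 * (x - y) * (u - v)) ≤ |y ^ 3 * (x - y)| * |u - v| := by
          rw [← abs_mul]; exact neg_le_abs _
      _ ≤ 2 * (1 + x ^ 4 + y ^ 4) * δ :=
          mul_le_mul (abs_pow_three_mul_sub_le x y) huv (abs_nonneg _) (by positivity)
  nlinarith [mul_le_mul_of_nonneg_left h ha]

lemma diffusion_time_increment_le (x y : ℝ) (hq : 0 ≤ q) (hu₀ : 0 ≤ u) (hu₂ : u ≤ 2)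
    (hv₀ : 0 ≤ v) (hv₂ : v ≤ 2) (huv : |u - v| ≤ δ) :
    3 * q * (d * y ^ 2 * (u - v)) ^ 2 ≤ 6 * d ^ 2 * q * (1 + x ^ 4 + y ^ 4) * δ := by
  have hδ : 0 ≤ δ := (abs_nonneg _).trans huv
  have hsq : (u - v) ^ 2 ≤ 2 * δ := by
    rw [← sq_abs, sq]
    exact mul_le_mul (abs_le.mpr ⟨by linarith, by linarith⟩) huv (abs_nonneg _) zero_le_two
  have hK : 0 ≤ q * d ^ 2 * y ^ 4 := by positivity
  nlinarith [mul_le_mul_of_nonneg_left hsq hK,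
    mul_nonneg (mul_nonneg (mul_nonneg hq (sq_nonneg d)) hδ) (by positivity : 0 ≤ 1 + x ^ 4)]

theorem coupled_monotonicity_of_abs_sub_le (b c x y : ℝ) (hq : 0 ≤ q)
    (hd : 12 * d ^ 2 * q ≤ a) (hu₀ : 0 ≤ u) (hu₂ : u ≤ 2) (hv₀ : 0 ≤ v) (hv₂ : v ≤ 2)
    (huv : |u - v| ≤ δ) :
    (x - y) * (-a * x ^ 3 * u - -a * y ^ 3 * v)
        + q * (b + c * x + d * x ^ 2 * u - (b + c * y + d * y ^ 2 * v)) ^ 2 ≤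
      3 * c ^ 2 * q * (x - y) ^ 2 + (2 * a + 6 * d ^ 2 * q) * (1 + x ^ 4 + y ^ 4) * δ := by
  have ha : 0 ≤ a := le_trans (by positivity) hd
  have hsplit := mul_le_mul_of_nonneg_left
    (sq_add_add_le_three_mul (c * (x - y)) (d * u * (x ^ 2 - y ^ 2)) (d * y ^ 2 * (u - v))) hq
  have hmono := cubic_drift_dominates_quadratic_diffusion x y hq hd hu₀ hu₂
  have hdrift := drift_time_increment_le x y ha huv (a := a)
  have hdiff := diffusion_time_increment_le x y hq hu₀ hu₂ hv₀ hv₂ huv (d := d)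
  linear_combination hsplit + hmono + hdrift + hdiff

end CoupledMonotonicity

theorem example_coupled_monotonicity_general (a b c d pstar : ℝ)
    (hp : 1 < pstar) (hd : 12 * d ^ 2 * (pstar - 1) ≤ a)
    (f g : ℝ → ℝ → ℝ)
    (hf : ∀ t x, f t x = -a * x ^ 3 * (1 + Real.sin (Real.pi * t)))
    (hg : ∀ t x, g t x = b + c * x + d * x ^ 2 * (1 + Real.sin (Real.pi * t))) :
    ∀ x y s t : ℝ,
      (x - y) * (f t x - f s y) + (pstar - 1) * (g t x - g s y) ^ 2 ≤
        3 * c ^ 2 * (pstar - 1) * (x - y) ^ 2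
          + (2 * a * Real.pi + 6 * Real.pi * d ^ 2 * (pstar - 1))
            * (1 + x ^ 4 + y ^ 4) * |t - s| := by
  intro x y s t
  have hsin : |(1 + sin (π * t)) - (1 + sin (π * s))| ≤ π * |t - s| := by
    rw [add_sub_add_left_eq_sub]
    exact abs_sin_mul_sub_sin_mul_le π t s pi_pos.le
  have key := coupled_monotonicity_of_abs_sub_le b c x y (sub_nonneg.mpr hp.le) hd
    (by linarith [neg_one_le_sin (π * t)]) (by linarith [sin_le_one (π * t)])
    (by linarith [neg_one_le_sin (π * s)]) (by linarith [sin_le_one (π * s)]) hsin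
  simp only [hf, hg]
  linarith

/-- coupled monotonicity condition for the example SDE with
`f(t,x) = -a x³ (1 + sin(π t))` and `g(t,x) = b + c x + d x² (1 + sin(π t))`,
under the requirement `12 d² (p* − 1) ≤ a`. -/
theorem example_coupled_monotonicity (a b c d pstar : ℝ)
    (ha : 0 < a) (hp : 1 < pstar) (hd : 12 * d ^ 2 * (pstar - 1) ≤ a)
    (f g : ℝ → ℝ → ℝ)
    (hf : ∀ t x, f t x = -a * x ^ 3 * (1 + Real.sin (Real.pi * t)))
    (hg : ∀ t x, g t x = b + c * x + d * x ^ 2 * (1 + Real.sin (Real.pi * t))) :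
    ∀ x y s t : ℝ,
      (x - y) * (f t x - f s y) + (pstar - 1) * (g t x - g s y) ^ 2 ≤
        3 * c ^ 2 * (pstar - 1) * (x - y) ^ 2
          + (2 * a * Real.pi + 6 * Real.pi * d ^ 2 * (pstar - 1))
            * (1 + x ^ 4 + y ^ 4) * |t - s| :=
  example_coupled_monotonicity_general a b c d pstar hp hd f g hf hg
end
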